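/- Let σ, ρ, τ : ℝ³ → ℂ be smooth functions of (x, s, t) with τ nowhere vanishing, satisfying the bilinear AKNS hierarchy equations: D_t σ·τ − (i/2)·D_x D_s σ·τ = 0, D_t ρ·τ + (i/2)·D_x D_s ρ·τ = 0, and D_x² τ·τ = −2σρ, i.e. 2(τ·τ_{xx} − (τ_x)²) = −2σρ. Set q = σ/τ, r = ρ/τ, V = τ_x/τ, and P = −∂_s V. Then: (a) q·r = −∂_x V, so ∂_x P = ∂_s(q r); (b) ∂_t q = (i/2)·∂_x∂_s q − i·q·P; (c) ∂_t r = −(i/2)·∂_x∂_s r + i·r·P. In other words, q and r satisfy the nonlinear AKNS hierarchy equations q_t = −(1/(2i))·q_{xs} − i q·∂_x^{−1}((qr)_s) and r_t = (1/(2i))·r_{xs} + i r·∂_x^{−1}((qr)_s), with the antiderivative ∂_x^{−1}((qr)_s) realized by P = −∂_s(τ_x/τ). -/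

import Mathlib

noncomputable section

/-- Partial derivative in the first variable `x` of a function on `ℝ³ = ℝ × ℝ × ℝ`. -/
def pX (f : ℝ × ℝ × ℝ → ℂ) : ℝ × ℝ × ℝ → ℂ :=
  fun p => deriv (fun x => f (x, p.2)) p.1

/-- Partial derivative in the second variable `s`. -/
def pS (f : ℝ × ℝ × ℝ → ℂ) : ℝ × ℝ × ℝ → ℂ :=
  fun p => deriv (fun s => f (p.1, s, p.2.2)) p.2.1

/-- Partial derivative in the third variable `t`. -/
def pT (f : ℝ × ℝ × ℝ → ℂ) : ℝ × ℝ × ℝ → ℂ :=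
  fun p => deriv (fun t => f (p.1, p.2.1, t)) p.2.2

/-- Hirota bilinear operator `D_t a·b = a_t b − a b_t`. -/
def HDt (a b : ℝ × ℝ × ℝ → ℂ) : ℝ × ℝ × ℝ → ℂ :=
  fun p => pT a p * b p - a p * pT b p

/-- Hirota bilinear operator `D_x D_s a·b = a_{xs} b − a_x b_s − a_s b_x + a b_{xs}`. -/
def HDxDs (a b : ℝ × ℝ × ℝ → ℂ) : ℝ × ℝ × ℝ → ℂ :=
  fun p => pX (pS a) p * b p - pX a p * pS b p - pS a p * pX b p + a p * pX (pS b) p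

/-- Hirota bilinear operator `D_x² a·a = 2(a a_{xx} − (a_x)²)`. -/
def HDx2self (a : ℝ × ℝ × ℝ → ℂ) : ℝ × ℝ × ℝ → ℂ :=
  fun p => 2 * (a p * pX (pX a) p - (pX a p) ^ 2)

section Aux
variable {f a b : ℝ × ℝ × ℝ → ℂ}

lemma diff_sliceX (hf : Differentiable ℝ f) (c : ℝ × ℝ) :
    Differentiable ℝ (fun x => f (x, c)) :=
  hf.comp (differentiable_id.prodMk (differentiable_const c))

lemma diff_sliceS (hf : Differentiable ℝ f) (c1 c3 : ℝ) :
    Differentiable ℝ (fun s => f (c1, s, c3)) :=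
  hf.comp ((differentiable_const c1).prodMk (differentiable_id.prodMk (differentiable_const c3)))

lemma diff_sliceT (hf : Differentiable ℝ f) (c1 c2 : ℝ) :
    Differentiable ℝ (fun t => f (c1, c2, t)) :=
  hf.comp ((differentiable_const c1).prodMk ((differentiable_const c2).prodMk differentiable_id))

lemma pX_eq_fderiv (hf : Differentiable ℝ f) (p : ℝ × ℝ × ℝ) :
    pX f p = fderiv ℝ f p (1, 0, 0) := by
  have h1 : HasDerivAt (fun x : ℝ => (x, p.2)) ((1 : ℝ), (0 : ℝ), (0 : ℝ)) p.1 :=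
    (hasDerivAt_id p.1).prodMk (hasDerivAt_const p.1 p.2)
  exact ((hf p).hasFDerivAt.comp_hasDerivAt p.1 h1).deriv

lemma pS_eq_fderiv (hf : Differentiable ℝ f) (p : ℝ × ℝ × ℝ) :
    pS f p = fderiv ℝ f p (0, 1, 0) := by
  have h1 : HasDerivAt (fun s : ℝ => (p.1, s, p.2.2)) ((0 : ℝ), (1 : ℝ), (0 : ℝ)) p.2.1 :=
    (hasDerivAt_const p.2.1 p.1).prodMk ((hasDerivAt_id p.2.1).prodMk (hasDerivAt_const p.2.1 p.2.2))
  exact ((hf p).hasFDerivAt.comp_hasDerivAt p.2.1 h1).deriv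

lemma pX_smooth (hf : ContDiff ℝ (⊤ : ℕ∞) f) : ContDiff ℝ (⊤ : ℕ∞) (pX f) := by
  have h : pX f = fun p => fderiv ℝ f p (1, 0, 0) :=
    funext fun p => pX_eq_fderiv (hf.differentiable (by simp)) p
  rw [h]
  exact (hf.fderiv_right (by simp)).clm_apply contDiff_const

lemma pS_smooth (hf : ContDiff ℝ (⊤ : ℕ∞) f) : ContDiff ℝ (⊤ : ℕ∞) (pS f) := by
  have h : pS f = fun p => fderiv ℝ f p (0, 1, 0) :=
    funext fun p => pS_eq_fderiv (hf.differentiable (by simp)) p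
  rw [h]
  exact (hf.fderiv_right (by simp)).clm_apply contDiff_const

lemma pX_pS_comm (hf : ContDiff ℝ (⊤ : ℕ∞) f) : pX (pS f) = pS (pX f) := by
  have hd := hf.differentiable (by simp)
  have hfd : ContDiff ℝ (⊤ : ℕ∞) (fderiv ℝ f) := hf.fderiv_right (by simp)
  have hfdd := hfd.differentiable (by simp)
  have hSf : pS f = fun z => fderiv ℝ f z (0, 1, 0) := funext fun z => pS_eq_fderiv hd z
  have hXf : pX f = fun z => fderiv ℝ f z (1, 0, 0) := funext fun z => pX_eq_fderiv hd z
  funext p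
  have hsymm := second_derivative_symmetric (f' := fderiv ℝ f)
    (fun y => (hd y).hasFDerivAt) (hfdd p).hasFDerivAt
  rw [hSf, hXf, pX_eq_fderiv (by exact (hfd.clm_apply contDiff_const).differentiable (by simp)) p,
    pS_eq_fderiv (by exact (hfd.clm_apply contDiff_const).differentiable (by simp)) p]
  rw [fderiv_clm_apply (hfdd p) (differentiableAt_const _),
      fderiv_clm_apply (hfdd p) (differentiableAt_const _)]
  simp only [fderiv_const, fderiv_fun_const, Pi.zero_apply, ContinuousLinearMap.comp_zero, zero_add,
    ContinuousLinearMap.add_apply, ContinuousLinearMap.zero_apply,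
    ContinuousLinearMap.flip_apply]
  exact hsymm _ _

lemma pX_div (ha : Differentiable ℝ a) (hb : Differentiable ℝ b) (hb0 : ∀ z, b z ≠ 0)
    (p : ℝ × ℝ × ℝ) :
    pX (fun z => a z / b z) p = (pX a p * b p - a p * pX b p) / (b p) ^ 2 :=
  deriv_div (diff_sliceX ha p.2 p.1) (diff_sliceX hb p.2 p.1) (hb0 p)

lemma pS_div (ha : Differentiable ℝ a) (hb : Differentiable ℝ b) (hb0 : ∀ z, b z ≠ 0)
    (p : ℝ × ℝ × ℝ) :
    pS (fun z => a z / b z) p = (pS a p * b p - a p * pS b p) / (b p) ^ 2 :=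
  deriv_div (diff_sliceS ha p.1 p.2.2 p.2.1) (diff_sliceS hb p.1 p.2.2 p.2.1) (hb0 p)

lemma pT_div (ha : Differentiable ℝ a) (hb : Differentiable ℝ b) (hb0 : ∀ z, b z ≠ 0)
    (p : ℝ × ℝ × ℝ) :
    pT (fun z => a z / b z) p = (pT a p * b p - a p * pT b p) / (b p) ^ 2 :=
  deriv_div (diff_sliceT ha p.1 p.2.1 p.2.2) (diff_sliceT hb p.1 p.2.1 p.2.2) (hb0 p)

lemma pX_mul (ha : Differentiable ℝ a) (hb : Differentiable ℝ b) (p : ℝ × ℝ × ℝ) :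
    pX (fun z => a z * b z) p = pX a p * b p + a p * pX b p :=
  deriv_mul (diff_sliceX ha p.2 p.1) (diff_sliceX hb p.2 p.1)

lemma pX_sub (ha : Differentiable ℝ a) (hb : Differentiable ℝ b) (p : ℝ × ℝ × ℝ) :
    pX (fun z => a z - b z) p = pX a p - pX b p :=
  deriv_sub (diff_sliceX ha p.2 p.1) (diff_sliceX hb p.2 p.1)

lemma pX_neg (p : ℝ × ℝ × ℝ) : pX (fun z => -(a z)) p = -(pX a p) := by
  simp only [pX]; exact deriv.neg

lemma pS_neg (p : ℝ × ℝ × ℝ) : pS (fun z => -(a z)) p = -(pS a p) := by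
  simp only [pS]; exact deriv.neg

lemma pX_sq (hb : Differentiable ℝ b) (p : ℝ × ℝ × ℝ) :
    pX (fun z => (b z) ^ 2) p = 2 * b p * pX b p := by
  have h : (fun z : ℝ × ℝ × ℝ => (b z) ^ 2) = fun z => b z * b z := by
    funext z; ring
  rw [h, pX_mul hb hb p]
  ring

end Aux

theorem stmt_1
    (σ ρ τ : ℝ × ℝ × ℝ → ℂ)
    (hσ : ContDiff ℝ (⊤ : ℕ∞) σ) (hρ : ContDiff ℝ (⊤ : ℕ∞) ρ) (hτ : ContDiff ℝ (⊤ : ℕ∞) τ)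
    (hτ0 : ∀ p, τ p ≠ 0)
    (heq1 : ∀ p, HDt σ τ p - (Complex.I / 2) * HDxDs σ τ p = 0)
    (heq2 : ∀ p, HDt ρ τ p + (Complex.I / 2) * HDxDs ρ τ p = 0)
    (heq3 : ∀ p, HDx2self τ p = -2 * σ p * ρ p)
    (q r V P : ℝ × ℝ × ℝ → ℂ)
    (hq : q = fun p => σ p / τ p)
    (hr : r = fun p => ρ p / τ p)
    (hV : V = fun p => pX τ p / τ p)
    (hP : P = fun p => -(pS V p)) :
    (∀ p, q p * r p = -(pX V p)) ∧
    (∀ p, pX P p = pS (fun z => q z * r z) p) ∧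
    (∀ p, pT q p = (Complex.I / 2) * pX (pS q) p - Complex.I * q p * P p) ∧
    (∀ p, pT r p = -(Complex.I / 2) * pX (pS r) p + Complex.I * r p * P p) := by
  subst hq hr hV hP
  have hσd := hσ.differentiable (by simp)
  have hρd := hρ.differentiable (by simp)
  have hτd := hτ.differentiable (by simp)
  have hXτ : ContDiff ℝ (⊤ : ℕ∞) (pX τ) := pX_smooth hτ
  have hXτd := hXτ.differentiable (by simp)
  have hSσd := (pS_smooth hσ).differentiable (by simp)
  have hSρd := (pS_smooth hρ).differentiable (by simp)
  have hSτd := (pS_smooth hτ).differentiable (by simp)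
  have hVc : ContDiff ℝ (⊤ : ℕ∞) (fun z => pX τ z / τ z) := by
    simp only [div_eq_mul_inv]
    exact hXτ.mul (hτ.inv hτ0)
  have hτ2d : Differentiable ℝ (fun z => (τ z) ^ 2) := fun z => (hτd z).pow 2
  have hτ20 : ∀ z, (τ z) ^ 2 ≠ 0 := fun z => pow_ne_zero 2 (hτ0 z)
  have hcττ : pS (pX τ) = pX (pS τ) := (pX_pS_comm hτ).symm
  have hVsp : ∀ p, pS (fun z => pX τ z / τ z) p
      = (pX (pS τ) p * τ p - pX τ p * pS τ p) / (τ p) ^ 2 := by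
    intro p
    rw [pS_div hXτd hτd hτ0 p, hcττ]
  have parta : ∀ p, σ p / τ p * (ρ p / τ p) = -(pX (fun z => pX τ z / τ z) p) := by
    intro p
    have key3 := heq3 p
    simp only [HDx2self] at key3
    rw [pX_div hXτd hτd hτ0 p]
    field_simp [hτ0 p]
    linear_combination key3 / 2
  refine ⟨fun p => parta p, ?_, ?_, ?_⟩
  · intro p
    beta_reduce
    rw [funext parta, pS_neg, pX_neg, pX_pS_comm hVc]
  · intro p
    beta_reduce
    have key1 : pT σ p * τ p - σ p * pT τ p = Complex.I / 2 *
        (pX (pS σ) p * τ p - pX σ p * pS τ p - pS σ p * pX τ p + σ p * pX (pS τ) p) := by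
      have h := heq1 p
      simp only [HDt, HDxDs] at h
      linear_combination h
    have hqs : pS (fun z => σ z / τ z) = fun z => (pS σ z * τ z - σ z * pS τ z) / (τ z) ^ 2 :=
      funext fun z => pS_div hσd hτd hτ0 z
    have hnum : Differentiable ℝ (fun z => pS σ z * τ z - σ z * pS τ z) :=
      (hSσd.mul hτd).sub (hσd.mul hSτd)
    rw [pT_div hσd hτd hτ0 p, key1, hqs, pX_div hnum hτ2d hτ20 p,
        pX_sub (a := fun z => pS σ z * τ z) (b := fun z => σ z * pS τ z) (hSσd.mul hτd) (hσd.mul hSτd) p,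
        pX_mul hSσd hτd p, pX_mul hσd hSτd p, pX_sq hτd p, hVsp p]
    field_simp [hτ0 p]
    ring
  · intro p
    beta_reduce
    have key2 : pT ρ p * τ p - ρ p * pT τ p = -(Complex.I / 2) *
        (pX (pS ρ) p * τ p - pX ρ p * pS τ p - pS ρ p * pX τ p + ρ p * pX (pS τ) p) := by
      have h := heq2 p
      simp only [HDt, HDxDs] at h
      linear_combination h
    have hrs : pS (fun z => ρ z / τ z) = fun z => (pS ρ z * τ z - ρ z * pS τ z) / (τ z) ^ 2 :=
      funext fun z => pS_div hρd hτd hτ0 z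
    have hnum : Differentiable ℝ (fun z => pS ρ z * τ z - ρ z * pS τ z) :=
      (hSρd.mul hτd).sub (hρd.mul hSτd)
    rw [pT_div hρd hτd hτ0 p, key2, hrs, pX_div hnum hτ2d hτ20 p,
        pX_sub (a := fun z => pS ρ z * τ z) (b := fun z => ρ z * pS τ z) (hSρd.mul hτd) (hρd.mul hSτd) p,
        pX_mul hSρd hτd p, pX_mul hρd hSτd p, pX_sq hτd p, hVsp p]
    field_simp [hτ0 p]
    ring
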